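/- Let κ ≥ 0, Λ > 0, λ > 0, θ ∈ ℝ, and let V be the set of continuously differentiable functions φ : [−1,1] → ℝ with φ(−1) = φ(1) = 0. Define m(θ) = inf_{φ∈V} [ (κ/2)∫_{−1}^{1}(φ² + Λ²·(φ′)²) dr + ∫_{−1}^{1} √(φ² + λ²·(φ′)²) dr − θ∫_{−1}^{1} φ dr ] and m̃(θ) = inf_{φ∈V} [ ∫_{−1}^{1} √(φ² + λ²·(φ′)²) dr − θ∫_{−1}^{1} φ dr ]. Then m(θ) < 0 if and only if m̃(θ) < 0. -/

import Mathlib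

/-- The set `V` of admissible test functions: C¹ functions on `[−1,1]`
vanishing at `±1`. -/
def V : Set (ℝ → ℝ) := {φ | ContDiff ℝ 1 φ ∧ φ (-1) = 0 ∧ φ 1 = 0}

/-- The functional `Φ_θ(φ) = E(φ) + Ψ_λ(φ) − θ∫φ`, with renormalized plastic free
energy `E(φ) = (κ/2)∫(φ² + Λ²(φ')²)` and dissipation `Ψ_λ(φ) = ∫√(φ² + λ²(φ')²)`. -/
noncomputable def Phi (κ Λ lam θ : ℝ) (φ : ℝ → ℝ) : ℝ :=
  (κ / 2) * (∫ r in (-1 : ℝ)..1, ((φ r) ^ 2 + Λ ^ 2 * (deriv φ r) ^ 2))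
    + (∫ r in (-1 : ℝ)..1, Real.sqrt ((φ r) ^ 2 + lam ^ 2 * (deriv φ r) ^ 2))
    - θ * ∫ r in (-1 : ℝ)..1, φ r

/-- The reduced functional `Φ̃_θ(φ) = Ψ_λ(φ) − θ∫φ`. -/
noncomputable def PhiTilde (lam θ : ℝ) (φ : ℝ → ℝ) : ℝ :=
  (∫ r in (-1 : ℝ)..1, Real.sqrt ((φ r) ^ 2 + lam ^ 2 * (deriv φ r) ^ 2))
    - θ * ∫ r in (-1 : ℝ)..1, φ r

/-- The stability indicator `m(θ) = inf_{φ ∈ V} Φ_θ(φ)` (valued in `EReal`, since the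
infimum may a priori be `−∞`). -/
noncomputable def m (κ Λ lam θ : ℝ) : EReal :=
  ⨅ φ : V, ((Phi κ Λ lam θ φ.1 : ℝ) : EReal)

/-- The reduced stability indicator `m̃(θ) = inf_{φ ∈ V} Φ̃_θ(φ)`. -/
noncomputable def mTilde (lam θ : ℝ) : EReal :=
  ⨅ φ : V, ((PhiTilde lam θ φ.1 : ℝ) : EReal)

/-!
Φ_θ = (κ/2)·E + Φ̃_θ with E ≥ 0, so Φ_θ < 0 forces Φ̃_θ < 0. Conversely, E is quadratic and
Φ̃_θ positively 1-homogeneous, so Φ_θ(tφ) = t²·(κ/2)E(φ) + t·Φ̃_θ(φ), which is negative for small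
t > 0 as soon as Φ̃_θ(φ) < 0.
-/

/-- The plastic free energy is `E(φ) = (κ/2) * plasticEnergy Λ φ`. -/
noncomputable def plasticEnergy (Λ : ℝ) (φ : ℝ → ℝ) : ℝ :=
  ∫ r in (-1 : ℝ)..1, ((φ r) ^ 2 + Λ ^ 2 * (deriv φ r) ^ 2)

lemma Phi_eq_add_PhiTilde (κ Λ lam θ : ℝ) (φ : ℝ → ℝ) :
    Phi κ Λ lam θ φ = κ / 2 * plasticEnergy Λ φ + PhiTilde lam θ φ := by
  rw [Phi, PhiTilde, plasticEnergy]
  ring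

lemma plasticEnergy_nonneg (Λ : ℝ) (φ : ℝ → ℝ) : 0 ≤ plasticEnergy Λ φ :=
  intervalIntegral.integral_nonneg (by norm_num) fun _ _ => by positivity

lemma PhiTilde_le_Phi {κ : ℝ} (hκ : 0 ≤ κ) (Λ lam θ : ℝ) (φ : ℝ → ℝ) :
    PhiTilde lam θ φ ≤ Phi κ Λ lam θ φ := by
  rw [Phi_eq_add_PhiTilde]
  have hE := plasticEnergy_nonneg Λ φ
  exact le_add_of_nonneg_left (by positivity)

lemma plasticEnergy_const_mul (Λ t : ℝ) (φ : ℝ → ℝ) :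
    plasticEnergy Λ (fun x => t * φ x) = t ^ 2 * plasticEnergy Λ φ := by
  rw [plasticEnergy, plasticEnergy, deriv_const_mul_field', ← intervalIntegral.integral_const_mul]
  congr 1
  ext r
  ring

lemma PhiTilde_const_mul (lam θ : ℝ) {t : ℝ} (ht : 0 ≤ t) (φ : ℝ → ℝ) :
    PhiTilde lam θ (fun x => t * φ x) = t * PhiTilde lam θ φ := by
  have hsqrt (r : ℝ) : √((t * φ r) ^ 2 + lam ^ 2 * (t * deriv φ r) ^ 2)
      = t * √((φ r) ^ 2 + lam ^ 2 * (deriv φ r) ^ 2) := by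
    rw [show (t * φ r) ^ 2 + lam ^ 2 * (t * deriv φ r) ^ 2
        = t ^ 2 * ((φ r) ^ 2 + lam ^ 2 * (deriv φ r) ^ 2) by ring,
      Real.sqrt_mul (sq_nonneg t), Real.sqrt_sq ht]
  simp only [PhiTilde, deriv_const_mul_field', hsqrt, intervalIntegral.integral_const_mul]
  ring

lemma const_mul_mem_V (t : ℝ) {φ : ℝ → ℝ} (hφ : φ ∈ V) : (fun x => t * φ x) ∈ V :=
  ⟨contDiff_const.mul hφ.1, by simp [hφ.2.1], by simp [hφ.2.2]⟩

lemma exists_pos_sq_mul_add_mul_neg {a c : ℝ} (ha : 0 ≤ a) (hc : c < 0) :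
    ∃ t > 0, t ^ 2 * a + t * c < 0 := by
  have hpos : 0 < a + 1 := by linarith
  refine ⟨-c / (a + 1), div_pos (neg_pos.mpr hc) hpos, ?_⟩
  have key : (-c / (a + 1)) ^ 2 * a + -c / (a + 1) * c = -c / (a + 1) * (c / (a + 1)) := by
    field_simp
    ring
  rw [key]
  exact mul_neg_of_pos_of_neg (div_pos (neg_pos.mpr hc) hpos) (div_neg_of_neg_of_pos hc hpos)

theorem stability_indicator_equiv_general (κ Λ lam θ : ℝ)
    (hκ : 0 ≤ κ) :
    m κ Λ lam θ < 0 ↔ mTilde lam θ < 0 := by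
  simp only [m, mTilde, iInf_lt_iff, EReal.coe_neg']
  constructor
  · rintro ⟨φ, hφ⟩
    exact ⟨φ, (PhiTilde_le_Phi hκ Λ lam θ φ.1).trans_lt hφ⟩
  · rintro ⟨⟨φ, hφV⟩, hφ⟩
    have hE := plasticEnergy_nonneg Λ φ
    obtain ⟨t, ht, hneg⟩ := exists_pos_sq_mul_add_mul_neg
      (a := κ / 2 * plasticEnergy Λ φ) (by positivity) hφ
    refine ⟨⟨_, const_mul_mem_V t hφV⟩, ?_⟩
    rw [Phi_eq_add_PhiTilde, plasticEnergy_const_mul, PhiTilde_const_mul lam θ ht.le]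
    linarith

/-- Proposition 3.5 of the paper: the stability indicator is negative if and only if the
reduced stability indicator is negative. -/
theorem stability_indicator_equiv (κ Λ lam θ : ℝ)
    (hκ : 0 ≤ κ) (hΛ : 0 < Λ) (hlam : 0 < lam) :
    m κ Λ lam θ < 0 ↔ mTilde lam θ < 0 :=
  stability_indicator_equiv_general κ Λ lam θ hκ
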